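/- Duality of conditional entropy for measured states: if |ρ⟩^{ABE} is a pure tripartite state, then S(Z^A|B)_ρ − S(Z^A|E)_ρ = S(A|B)_ρ, where S(Z^A|B) is the conditional entropy after dephasing A in the standard basis. -/

import Mathlib

open Matrix Kronecker ComplexOrder

noncomputable section

/-- ω = e^{2πi/d} -/
noncomputable def qomega (d : ℕ) : ℂ := Complex.exp (2 * Real.pi * Complex.I / d)

/-- Generalized Pauli Z: Z|k⟩ = ω^k |k⟩. -/
noncomputable def pauliZ (d : ℕ) : Matrix (Fin d) (Fin d) ℂ :=
  Matrix.diagonal fun k : Fin d => qomega d ^ (k : ℕ)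

/-- Generalized Pauli X: X|k⟩ = |k+1 mod d⟩. -/
noncomputable def pauliX (d : ℕ) [NeZero d] : Matrix (Fin d) (Fin d) ℂ :=
  Matrix.of fun i j : Fin d => if i = j + 1 then 1 else 0

/-- Fourier matrix: column j is |x̃_j⟩ = (1/√d) Σ_k ω^{jk} |k⟩. -/
noncomputable def fourierMat (d : ℕ) : Matrix (Fin d) (Fin d) ℂ :=
  Matrix.of fun k j : Fin d => qomega d ^ ((j : ℕ) * (k : ℕ)) / (Real.sqrt d : ℂ)

/-- density operator predicate -/
def IsDensity {n : Type*} [Fintype n] (ρ : Matrix n n ℂ) : Prop :=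
  ρ.PosSemidef ∧ ρ.trace = 1

/-- von Neumann entropy in base 2, via eigenvalues. -/
noncomputable def vN {n : Type*} [Fintype n] [DecidableEq n] (ρ : Matrix n n ℂ) : ℝ :=
  if h : ρ.IsHermitian then ∑ i, -(h.eigenvalues i * Real.logb 2 (h.eigenvalues i)) else 0

/-- complete dephasing in the standard basis -/
def dephase {n : Type*} [DecidableEq n] (M : Matrix n n ℂ) : Matrix n n ℂ :=
  Matrix.of fun i j => if i = j then M i j else 0

/-- dephasing of the first (A) factor of a bipartite state, standard (Z eigen-) basis -/
def dephaseA {a b : Type*} [DecidableEq a] (M : Matrix (a × b) (a × b) ℂ) :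
    Matrix (a × b) (a × b) ℂ :=
  Matrix.of fun p q => if p.1 = q.1 then M p q else 0

/-- dephasing of the first (A) factor in the Fourier (X eigen-) basis -/
noncomputable def dephaseXA (d : ℕ) {b : Type*} [Fintype b] [DecidableEq b]
    (M : Matrix (Fin d × b) (Fin d × b) ℂ) : Matrix (Fin d × b) (Fin d × b) ℂ :=
  (fourierMat d ⊗ₖ (1 : Matrix b b ℂ)) *
    dephaseA ((fourierMat d ⊗ₖ (1 : Matrix b b ℂ))ᴴ * M * (fourierMat d ⊗ₖ (1 : Matrix b b ℂ))) *
    (fourierMat d ⊗ₖ (1 : Matrix b b ℂ))ᴴ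

/-- reduced state on A of a bipartite state -/
def r2A {a b : Type*} [Fintype b] (M : Matrix (a × b) (a × b) ℂ) : Matrix a a ℂ :=
  Matrix.of fun i j => ∑ y : b, M (i, y) (j, y)

/-- reduced state on B of a bipartite state -/
def r2B {a b : Type*} [Fintype a] (M : Matrix (a × b) (a × b) ℂ) : Matrix b b ℂ :=
  Matrix.of fun i j => ∑ x : a, M (x, i) (x, j)

/-- reduced state on AB of a tripartite state on A ⊗ B ⊗ E -/
def rAB {a b e : Type*} [Fintype e] (M : Matrix (a × b × e) (a × b × e) ℂ) :
    Matrix (a × b) (a × b) ℂ :=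
  Matrix.of fun p q => ∑ x : e, M (p.1, p.2, x) (q.1, q.2, x)

/-- reduced state on AE of a tripartite state -/
def rAE {a b e : Type*} [Fintype b] (M : Matrix (a × b × e) (a × b × e) ℂ) :
    Matrix (a × e) (a × e) ℂ :=
  Matrix.of fun p q => ∑ y : b, M (p.1, y, p.2) (q.1, y, q.2)

/-- reduced state on A of a tripartite state -/
def rA {a b e : Type*} [Fintype b] [Fintype e] (M : Matrix (a × b × e) (a × b × e) ℂ) :
    Matrix a a ℂ :=
  Matrix.of fun i j => ∑ y : b, ∑ x : e, M (i, y, x) (j, y, x)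

/-- reduced state on B of a tripartite state -/
def rB {a b e : Type*} [Fintype a] [Fintype e] (M : Matrix (a × b × e) (a × b × e) ℂ) :
    Matrix b b ℂ :=
  Matrix.of fun i j => ∑ x : a, ∑ z : e, M (x, i, z) (x, j, z)

/-- reduced state on E of a tripartite state -/
def rE {a b e : Type*} [Fintype a] [Fintype b] (M : Matrix (a × b × e) (a × b × e) ℂ) :
    Matrix e e ℂ :=
  Matrix.of fun i j => ∑ x : a, ∑ y : b, M (x, y, i) (x, y, j)

/-- matrix logarithm (base 2) of a Hermitian matrix via spectral decomposition -/
noncomputable def mlog {n : Type*} [Fintype n] [DecidableEq n] (M : Matrix n n ℂ) :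
    Matrix n n ℂ :=
  if h : M.IsHermitian then
    (h.eigenvectorUnitary : Matrix n n ℂ) *
      Matrix.diagonal (fun i => (Real.logb 2 (h.eigenvalues i) : ℂ)) *
      (h.eigenvectorUnitary : Matrix n n ℂ)ᴴ
  else 0

/-- quantum relative entropy S(ρ‖σ) = Tr[ρ(log₂ρ − log₂σ)] -/
noncomputable def relEnt {n : Type*} [Fintype n] [DecidableEq n] (ρ σ : Matrix n n ℂ) : ℝ :=
  ((ρ * (mlog ρ - mlog σ)).trace).re

/-- trace norm of a Hermitian matrix -/
noncomputable def traceNorm {n : Type*} [Fintype n] [DecidableEq n] (M : Matrix n n ℂ) : ℝ :=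
  if h : M.IsHermitian then ∑ i, |h.eigenvalues i| else 0

/-!
Write the amplitudes of the pure state as a matrix `Ψ` from `E` to `AB`. Then `ρ_AB = Ψ Ψᴴ` and
`ρ_E = (Ψᴴ Ψ)ᵀ`; since `Ψ Ψᴴ` and `Ψᴴ Ψ` have the same nonzero eigenvalues, `S(AB) = S(E)`.
Dephasing `A` amounts to copying `A` into a fresh register `A'` and tracing `A'` out. The copied
state is again pure, and its marginals on `AB` and on `A'E` are the dephased `ρ_AB` and `ρ_AE`,
so by the same argument `S(Z^A B) = S(Z^A E)`. The identity is the difference of these two.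
-/

open Polynomial

section Entropy

variable {m n : Type*} [Fintype m] [DecidableEq m] [Fintype n] [DecidableEq n]

lemma vN_eq_sum_roots_charpoly {M : Matrix n n ℂ} (hM : M.IsHermitian) :
    vN M = (M.charpoly.roots.map fun z : ℂ => -(z.re * Real.logb 2 z.re)).sum := by
  rw [vN, dif_pos hM, hM.roots_charpoly_eq_eigenvalues, Multiset.map_map,
    Finset.sum_eq_multiset_sum]
  simp [Function.comp_def]

/-- Zero eigenvalues do not contribute to the entropy, so padding the characteristic
polynomial by powers of `X` does not change it. -/
lemma vN_eq_of_X_pow_mul_charpoly_eq {M : Matrix m m ℂ} {N : Matrix n n ℂ}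
    (hM : M.IsHermitian) (hN : N.IsHermitian)
    (h : X ^ Fintype.card n * M.charpoly = X ^ Fintype.card m * N.charpoly) :
    vN M = vN N := by
  have hroots := congrArg
    (fun p : ℂ[X] => (p.roots.map fun z : ℂ => -(z.re * Real.logb 2 z.re)).sum) h
  simp only [roots_mul ((monic_X_pow _).mul (charpoly_monic _)).ne_zero, roots_X_pow,
    Multiset.map_add, Multiset.sum_add, Multiset.map_nsmul, Multiset.sum_nsmul,
    Multiset.map_singleton, Multiset.sum_singleton, Complex.zero_re, zero_mul, neg_zero,
    smul_zero, zero_add] at hroots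
  rw [vN_eq_sum_roots_charpoly hM, vN_eq_sum_roots_charpoly hN, hroots]

lemma vN_transpose (M : Matrix n n ℂ) : vN Mᵀ = vN M := by
  by_cases hM : M.IsHermitian
  · rw [vN_eq_sum_roots_charpoly hM.transpose, vN_eq_sum_roots_charpoly hM, charpoly_transpose]
  · have hMt : ¬ Mᵀ.IsHermitian := fun h => hM (by simpa using h.transpose)
    simp only [vN, dif_neg hM, dif_neg hMt]

lemma vN_mul_conjTranspose_self (A : Matrix m n ℂ) : vN (A * Aᴴ) = vN (Aᴴ * A) :=
  vN_eq_of_X_pow_mul_charpoly_eq (isHermitian_mul_conjTranspose_self A)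
    (isHermitian_conjTranspose_mul_self A) (charpoly_mul_comm' A Aᴴ)

end Entropy

section PureState

variable {a b e : Type*}

def coeffAB_E (ψ : a × b × e → ℂ) : Matrix (a × b) e ℂ :=
  of fun p z => ψ (p.1, p.2, z)

/-- The amplitudes of `∑ ψ(k, y, z) |k⟩_A |y⟩_B |k⟩_A' |z⟩_E`, in which `A` is copied into
`A'`: tracing out `A'` dephases `A`. -/
def copiedCoeffAB_AE [DecidableEq a] (ψ : a × b × e → ℂ) : Matrix (a × b) (a × e) ℂ :=
  of fun p q => if p.1 = q.1 then ψ (p.1, p.2, q.2) else 0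

lemma rAB_pure [Fintype e] (ψ : a × b × e → ℂ) :
    rAB (of fun p q => ψ p * star (ψ q)) = coeffAB_E ψ * (coeffAB_E ψ)ᴴ := by
  ext p q
  simp [rAB, coeffAB_E, mul_apply]

lemma rE_pure [Fintype a] [Fintype b] (ψ : a × b × e → ℂ) :
    rE (of fun p q => ψ p * star (ψ q)) = ((coeffAB_E ψ)ᴴ * coeffAB_E ψ)ᵀ := by
  ext z z'
  simp [rE, coeffAB_E, mul_apply, Fintype.sum_prod_type, mul_comm]

lemma dephaseA_rAB_pure [Fintype a] [DecidableEq a] [Fintype e] (ψ : a × b × e → ℂ) :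
    dephaseA (rAB (of fun p q => ψ p * star (ψ q))) =
      copiedCoeffAB_AE ψ * (copiedCoeffAB_AE ψ)ᴴ := by
  ext ⟨k, y⟩ ⟨k', y'⟩
  by_cases hk : k = k'
  · subst hk
    simp [dephaseA, rAB, copiedCoeffAB_AE, mul_apply, Fintype.sum_prod_type]
  · simp [dephaseA, copiedCoeffAB_AE, mul_apply, Fintype.sum_prod_type, hk, Ne.symm hk]

lemma dephaseA_rAE_pure [Fintype a] [DecidableEq a] [Fintype b] (ψ : a × b × e → ℂ) :
    dephaseA (rAE (of fun p q => ψ p * star (ψ q))) =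
      ((copiedCoeffAB_AE ψ)ᴴ * copiedCoeffAB_AE ψ)ᵀ := by
  ext ⟨k, z⟩ ⟨k', z'⟩
  by_cases hk : k = k'
  · subst hk
    simp [dephaseA, rAE, copiedCoeffAB_AE, mul_apply, Fintype.sum_prod_type, mul_comm]
  · simp [dephaseA, copiedCoeffAB_AE, mul_apply, Fintype.sum_prod_type, hk]

lemma vN_rAB_pure_eq_vN_rE [Fintype a] [DecidableEq a] [Fintype b] [DecidableEq b]
    [Fintype e] [DecidableEq e] (ψ : a × b × e → ℂ) :
    vN (rAB (of fun p q => ψ p * star (ψ q))) = vN (rE (of fun p q => ψ p * star (ψ q))) := by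
  rw [rAB_pure, rE_pure, vN_transpose, vN_mul_conjTranspose_self]

lemma vN_dephaseA_rAB_pure_eq_vN_dephaseA_rAE [Fintype a] [DecidableEq a] [Fintype b]
    [DecidableEq b] [Fintype e] [DecidableEq e] (ψ : a × b × e → ℂ) :
    vN (dephaseA (rAB (of fun p q => ψ p * star (ψ q)))) =
      vN (dephaseA (rAE (of fun p q => ψ p * star (ψ q)))) := by
  rw [dephaseA_rAB_pure, dephaseA_rAE_pure, vN_transpose, vN_mul_conjTranspose_self]

end PureState

theorem dephased_cond_entropy_duality_general (d : ℕ)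
    {b e : Type*} [Fintype b] [DecidableEq b] [Fintype e] [DecidableEq e]
    (ψ : Fin d × b × e → ℂ) :
    (fun ρ : Matrix (Fin d × b × e) (Fin d × b × e) ℂ =>
      (vN (dephaseA (rAB ρ)) - vN (rB ρ)) - (vN (dephaseA (rAE ρ)) - vN (rE ρ))
        = vN (rAB ρ) - vN (rB ρ))
      (Matrix.of fun p q => ψ p * star (ψ q)) := by
  beta_reduce
  rw [vN_rAB_pure_eq_vN_rE, vN_dephaseA_rAB_pure_eq_vN_dephaseA_rAE]
  ring

/-- duality for pure tripartite states:
S(Z^A|B)_ρ − S(Z^A|E)_ρ = S(A|B)_ρ. -/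
theorem dephased_cond_entropy_duality (d : ℕ) [NeZero d]
    {b e : Type*} [Fintype b] [DecidableEq b] [Fintype e] [DecidableEq e]
    (ψ : Fin d × b × e → ℂ) (hψ : ∑ p, Complex.normSq (ψ p) = 1) :
    (fun ρ : Matrix (Fin d × b × e) (Fin d × b × e) ℂ =>
      (vN (dephaseA (rAB ρ)) - vN (rB ρ)) - (vN (dephaseA (rAE ρ)) - vN (rE ρ))
        = vN (rAB ρ) - vN (rB ρ))
      (Matrix.of fun p q => ψ p * star (ψ q)) :=
  dephased_cond_entropy_duality_general d ψ
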